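/- arXiv:2512.08651 — 3 statements merged into one kernel-verified Lean document; each statement's English description precedes it below -/
import Mathlib

section
/- Let N ↪ L and N ↪ L' be two even overlattices of an even lattice N (i.e. finite-index embeddings). Then there is an isometry L ≅ L' commuting with the embeddings of N if and only if the subgroups G_L = L/N and G_{L'} = L'/N of A_N are equal. -/
/-!
Pairing an overlattice `L ⊇ N` against `N` gives `φ_L : L → N^∨`, `l ↦ B_L(l, f ·)`. It is
injective, because a functional on `L` that vanishes on the finite-index sublattice `N` vanishes,
and its image is the preimage of `G_L` in `N^∨`, which contains `N`. Equal subgroups of `A_N`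
therefore give `φ_L(L) = φ_{L'}(L')`, and `τ := φ_{L'}⁻¹ ∘ φ_L` is the isometry: `k • y ∈ N`
for some `k ≠ 0`, and on `N` the forms are matched by construction.
-/

open LinearMap (BilinForm)

namespace Submodule

theorem map_mkQ_eq_map_mkQ_iff {R M : Type*} [Ring R] [AddCommGroup M] [Module R M]
    {p q q' : Submodule R M} (hq : p ≤ q) (hq' : p ≤ q') :
    q.map p.mkQ = q'.map p.mkQ ↔ q = q' := by
  refine ⟨fun h => ?_, fun h => h ▸ rfl⟩
  simpa only [comap_map_mkQ, sup_eq_right.mpr hq, sup_eq_right.mpr hq'] using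
    congrArg (comap p.mkQ) h

theorem exists_zsmul_mem_of_finite_quotient {M : Type*} [AddCommGroup M] [Module ℤ M]
    (p : Submodule ℤ M) [Finite (M ⧸ p)] (m : M) : ∃ k : ℤ, k ≠ 0 ∧ k • m ∈ p := by
  refine ⟨addOrderOf (p.mkQ m), Nat.cast_ne_zero.mpr (addOrderOf_pos _).ne', ?_⟩
  rw [← Quotient.mk_eq_zero, Quotient.mk_smul, Nat.cast_smul_eq_nsmul]
  exact addOrderOf_nsmul_eq_zero _

end Submodule

theorem LinearEquiv.exists_comp_eq_of_range_eq {R M M' P : Type*} [Semiring R]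
    [AddCommMonoid M] [Module R M] [AddCommMonoid M'] [Module R M'] [AddCommMonoid P]
    [Module R P] {φ : M →ₗ[R] P} {ψ : M' →ₗ[R] P}
    (hφ : Function.Injective φ) (hψ : Function.Injective ψ)
    (h : LinearMap.range φ = LinearMap.range ψ) :
    ∃ τ : M ≃ₗ[R] M', ψ ∘ₗ (τ : M →ₗ[R] M') = φ := by
  refine ⟨ofInjective φ hφ ≪≫ₗ ofEq _ _ h ≪≫ₗ (ofInjective ψ hψ).symm, ?_⟩
  ext x
  simp

section FiniteIndex

variable {N L : Type*} [AddCommGroup N] [Module ℤ N] [AddCommGroup L] [Module ℤ L]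

theorem LinearMap.ext_of_comp_eq_of_finite_quotient {M : Type*} [AddCommGroup M] [Module ℤ M]
    [IsAddTorsionFree M] {f : N →ₗ[ℤ] L} (hfin : Finite (L ⧸ LinearMap.range f))
    {u v : L →ₗ[ℤ] M} (h : u ∘ₗ f = v ∘ₗ f) : u = v := by
  ext m
  obtain ⟨k, hk, n, hn⟩ := (LinearMap.range f).exists_zsmul_mem_of_finite_quotient m
  have hkm : u (k • m) = v (k • m) := hn ▸ LinearMap.congr_fun h n
  rw [map_zsmul, map_zsmul] at hkm
  exact zsmul_right_injective hk hkm

theorem LinearMap.dualMap_injective_of_finite_quotient {f : N →ₗ[ℤ] L}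
    (hfin : Finite (L ⧸ LinearMap.range f)) : Function.Injective f.dualMap :=
  fun _ _ h => LinearMap.ext_of_comp_eq_of_finite_quotient hfin h

theorem LinearMap.dualMap_comp_injective_of_finite_quotient {B : BilinForm ℤ L}
    (hB : B.SeparatingLeft) {f : N →ₗ[ℤ] L} (hfin : Finite (L ⧸ LinearMap.range f)) :
    Function.Injective (f.dualMap ∘ₗ (B : L →ₗ[ℤ] Module.Dual ℤ L)) :=
  (dualMap_injective_of_finite_quotient hfin).comp
    (LinearMap.ker_eq_bot.mp (LinearMap.separatingLeft_iff_ker_eq_bot.mp hB))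

theorem LinearMap.range_le_range_dualMap_comp {BN : BilinForm ℤ N} {BL : BilinForm ℤ L}
    {f : N →ₗ[ℤ] L} (hf : ∀ x y, BL (f x) (f y) = BN x y) :
    LinearMap.range (BN : N →ₗ[ℤ] Module.Dual ℤ N) ≤
      LinearMap.range (f.dualMap ∘ₗ (BL : L →ₗ[ℤ] Module.Dual ℤ L)) := by
  rintro _ ⟨n, rfl⟩
  exact ⟨f n, LinearMap.ext fun m => hf n m⟩

end FiniteIndex

section Overlattice

variable {N L L' : Type*} [AddCommGroup N] [Module ℤ N] [AddCommGroup L] [Module ℤ L]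
  [AddCommGroup L'] [Module ℤ L'] {BN : BilinForm ℤ N} {BL : BilinForm ℤ L}
  {BL' : BilinForm ℤ L'} {f : N →ₗ[ℤ] L} {g : N →ₗ[ℤ] L'}

theorem range_dualMap_comp_eq_of_isometry (τ : L ≃ₗ[ℤ] L')
    (hτ : ∀ x y, BL' (τ x) (τ y) = BL x y) (hτf : ∀ n, τ (f n) = g n) :
    LinearMap.range (f.dualMap ∘ₗ (BL : L →ₗ[ℤ] Module.Dual ℤ L)) =
      LinearMap.range (g.dualMap ∘ₗ (BL' : L' →ₗ[ℤ] Module.Dual ℤ L')) := by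
  have hcomp : (g.dualMap ∘ₗ (BL' : L' →ₗ[ℤ] Module.Dual ℤ L')) ∘ₗ (τ : L →ₗ[ℤ] L') =
      f.dualMap ∘ₗ (BL : L →ₗ[ℤ] Module.Dual ℤ L) := by
    refine LinearMap.ext fun l => LinearMap.ext fun n => ?_
    simp only [LinearMap.comp_apply, LinearMap.dualMap_apply, LinearEquiv.coe_coe, ← hτf n, hτ]
  rw [← hcomp, LinearMap.range_comp, LinearEquiv.range, Submodule.map_top]

theorem exists_isometry_of_range_dualMap_comp_eq (hndL : BL.SeparatingLeft)
    (hndL' : BL'.SeparatingLeft) (hf : ∀ x y, BL (f x) (f y) = BN x y)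
    (hffin : Finite (L ⧸ LinearMap.range f)) (hg : ∀ x y, BL' (g x) (g y) = BN x y)
    (hgfin : Finite (L' ⧸ LinearMap.range g))
    (h : LinearMap.range (f.dualMap ∘ₗ (BL : L →ₗ[ℤ] Module.Dual ℤ L)) =
      LinearMap.range (g.dualMap ∘ₗ (BL' : L' →ₗ[ℤ] Module.Dual ℤ L'))) :
    ∃ τ : L ≃ₗ[ℤ] L', (∀ x y, BL' (τ x) (τ y) = BL x y) ∧ ∀ n, τ (f n) = g n := by
  have hψ := LinearMap.dualMap_comp_injective_of_finite_quotient hndL' hgfin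
  obtain ⟨τ, hτ⟩ := LinearEquiv.exists_comp_eq_of_range_eq
    (LinearMap.dualMap_comp_injective_of_finite_quotient hndL hffin) hψ h
  have hτl (l : L) (n : N) : BL' (τ l) (g n) = BL l (f n) :=
    LinearMap.congr_fun (LinearMap.congr_fun hτ l) n
  have hτf (n : N) : τ (f n) = g n :=
    hψ <| LinearMap.ext fun m => by simp [hτl, hf, hg]
  refine ⟨τ, fun x y => ?_, hτf⟩
  have hext : (BL' (τ x)) ∘ₗ (τ : L →ₗ[ℤ] L') = BL x :=
    LinearMap.ext_of_comp_eq_of_finite_quotient hffin <|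
      LinearMap.ext fun n => by simp [hτf, hτl]
  exact LinearMap.congr_fun hext y

end Overlattice

theorem stmt14_general {N L L' : Type*}
    [AddCommGroup N] [Module ℤ N]
    [AddCommGroup L] [Module ℤ L]
    [AddCommGroup L'] [Module ℤ L']
    (BN : BilinForm ℤ N) (BL : BilinForm ℤ L) (BL' : BilinForm ℤ L')
    (hndL : BL.Nondegenerate) (hndL' : BL'.Nondegenerate)
    (f : N →ₗ[ℤ] L) (hf : ∀ x y, BL (f x) (f y) = BN x y)
    (hffin : Finite (L ⧸ LinearMap.range f))
    (g : N →ₗ[ℤ] L') (hg : ∀ x y, BL' (g x) (g y) = BN x y)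
    (hgfin : Finite (L' ⧸ LinearMap.range g)) :
    (∃ τ : L ≃ₗ[ℤ] L', (∀ x y, BL' (τ x) (τ y) = BL x y) ∧ ∀ n, τ (f n) = g n) ↔
      Submodule.map (LinearMap.range (BN : N →ₗ[ℤ] Module.Dual ℤ N)).mkQ
          (LinearMap.range (f.dualMap ∘ₗ (BL : L →ₗ[ℤ] Module.Dual ℤ L)))
        = Submodule.map (LinearMap.range (BN : N →ₗ[ℤ] Module.Dual ℤ N)).mkQ
          (LinearMap.range (g.dualMap ∘ₗ (BL' : L' →ₗ[ℤ] Module.Dual ℤ L'))) := by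
  rw [Submodule.map_mkQ_eq_map_mkQ_iff (LinearMap.range_le_range_dualMap_comp hf)
    (LinearMap.range_le_range_dualMap_comp hg)]
  exact ⟨fun ⟨τ, hτ, hτf⟩ => range_dualMap_comp_eq_of_isometry τ hτ hτf,
    exists_isometry_of_range_dualMap_comp_eq hndL.1 hndL'.1 hf hffin hg hgfin⟩

/-- Nikulin's Proposition 1.4.2(1). Let `f : N ↪ L` and `g : N ↪ L'` be two even
overlattices of an even lattice `N` (metric morphisms with finite cokernel). Then there is
an isometry `τ : L ≅ L'` commuting with the embeddings of `N` if and only if the subgroups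
`G_L = L/N` and `G_{L'} = L'/N` of `A_N = N^∨/N` coincide. (Here `L/N` is viewed inside
`A_N` via `l ↦ (B_L(l, f·) mod N)`, using the chain `N ⊆ L ⊆ L^∨ ⊆ N^∨`.) -/
theorem stmt14 {N L L' : Type*}
    [AddCommGroup N] [Module ℤ N] [Module.Free ℤ N] [Module.Finite ℤ N]
    [AddCommGroup L] [Module ℤ L] [Module.Free ℤ L] [Module.Finite ℤ L]
    [AddCommGroup L'] [Module ℤ L'] [Module.Free ℤ L'] [Module.Finite ℤ L']
    (BN : BilinForm ℤ N) (BL : BilinForm ℤ L) (BL' : BilinForm ℤ L')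
    (hsymN : ∀ x y, BN x y = BN y x) (hsymL : ∀ x y, BL x y = BL y x)
    (hsymL' : ∀ x y, BL' x y = BL' y x)
    (hndN : BN.Nondegenerate) (hndL : BL.Nondegenerate) (hndL' : BL'.Nondegenerate)
    (hevN : ∀ x, Even (BN x x)) (hevL : ∀ x, Even (BL x x)) (hevL' : ∀ x, Even (BL' x x))
    (f : N →ₗ[ℤ] L) (hf : ∀ x y, BL (f x) (f y) = BN x y)
    (hffin : Finite (L ⧸ LinearMap.range f))
    (g : N →ₗ[ℤ] L') (hg : ∀ x y, BL' (g x) (g y) = BN x y)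
    (hgfin : Finite (L' ⧸ LinearMap.range g)) :
    (∃ τ : L ≃ₗ[ℤ] L', (∀ x y, BL' (τ x) (τ y) = BL x y) ∧ ∀ n, τ (f n) = g n) ↔
      Submodule.map (LinearMap.range (BN : N →ₗ[ℤ] Module.Dual ℤ N)).mkQ
          (LinearMap.range (f.dualMap ∘ₗ (BL : L →ₗ[ℤ] Module.Dual ℤ L)))
        = Submodule.map (LinearMap.range (BN : N →ₗ[ℤ] Module.Dual ℤ N)).mkQ
          (LinearMap.range (g.dualMap ∘ₗ (BL' : L' →ₗ[ℤ] Module.Dual ℤ L'))) :=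
  stmt14_general BN BL BL' hndL hndL' f hf hffin g hg hgfin
end

section
/- Let Λ be an even lattice with disc(Λ) = 3, and let T ↪ Λ be a primitive sublattice with orthogonal complement N such that disc(T) is coprime to 3. Then the discriminant form A_N is isomorphic, as a finite quadratic module, to A_T(−1) ⊕ C₃, where C₃ is a non-degenerate quadratic form on ℤ/3ℤ; consequently O(A_N) ≅ O(A_T) × O(C₃). -/
/-!
Orthogonal projection of `V` onto `span T` and onto its orthogonal complement maps `Λ^∨` onto
`T^∨` and `N^∨` (the projection onto `span T` is defined because `A_T` is finite, and it is onto
because `T` is primitive, so linear forms on `T` extend to `Λ`). This gives surjections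
`d_T : Λ^∨ → A_T` and `d_N : Λ^∨ → A_N`. On `Λ` both have kernel `T ⊕ N`, and since `3` kills
`A_Λ` while `|A_T|` is prime to `3`, `d_T` is already onto on `Λ`; hence `d_N ∘ d_T⁻¹` is a
well-defined injective gluing map `f : A_T → A_N`, with `q_N ∘ f = -q_T` because `Λ` is even. The
map `d_N - f ∘ d_T` has kernel exactly `Λ`, so it embeds `A_Λ ≅ ℤ/3` into `A_N` and
`A_N = f(A_T) ⊕ A_Λ`. The coprime orders make the two summands orthogonal for `q_N` and force
every automorphism of `A_N` to preserve both of them. On `A_Λ` the form is `[x] ↦ B(x, x)`, which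
is nondegenerate because `Λ^∨^∨ = Λ`.
-/

open LinearMap (BilinForm)

/-- `q` is a finite quadratic form: `q(n • x) = n² • q(x)`. -/
def IsQuadratic {A : Type*} [AddCommGroup A] (q : A → AddCircle (2 : ℚ)) : Prop :=
  ∀ (n : ℤ) (x : A), q (n • x) = (n ^ 2) • q x

/-- Non-degeneracy of the associated bilinear form of a finite quadratic form. -/
def Nondeg {A : Type*} [AddCommGroup A] (q : A → AddCircle (2 : ℚ)) : Prop :=
  ∀ x : A, x ≠ 0 → ∃ y : A, q (x + y) - q x - q y ≠ 0

/-- The isometry group `O(A,q)` of a finite quadratic module, as a subgroup of `AddAut A`. -/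
def isometryGroup {A : Type*} [AddCommGroup A] (q : A → AddCircle (2 : ℚ)) :
    Subgroup (Multiplicative (AddAut A)) where
  carrier := {σ | ∀ x : A, q (Multiplicative.toAdd σ x) = q x}
  one_mem' := fun _ => rfl
  mul_mem' := by
    intro σ τ hσ hτ x
    have : Multiplicative.toAdd (σ * τ) x =
        Multiplicative.toAdd σ (Multiplicative.toAdd τ x) := rfl
    rw [this, hσ, hτ]
  inv_mem' := by
    intro σ hσ x
    have h1 : Multiplicative.toAdd σ (Multiplicative.toAdd σ⁻¹ x) = x :=
      (Multiplicative.toAdd σ).apply_symm_apply x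
    have := hσ (Multiplicative.toAdd σ⁻¹ x)
    rw [h1] at this
    exact this.symm

section

variable {V : Type*} [AddCommGroup V] [Module ℚ V]

/-- The dual lattice `W^∨ = {x ∈ span_ℚ(W) : B(x,W) ⊆ ℤ}` of a sublattice `W`. -/
def dualLat (B : BilinForm ℚ V) (W : Submodule ℤ V) : Submodule ℤ V :=
  B.dualSubmodule W ⊓ Submodule.restrictScalars ℤ (Submodule.span ℚ (W : Set V))

/-- The discriminant group `A_W = W^∨ / W` of a sublattice `W`. -/
abbrev discGroup (B : BilinForm ℚ V) (W : Submodule ℤ V) :=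
  ↥(dualLat B W) ⧸ Submodule.comap (dualLat B W).subtype W

end

universe u

section FiniteQuadraticModule

variable {A C D : Type*} [AddCommGroup A] [AddCommGroup C] [AddCommGroup D] {m n : ℕ}

theorem eq_zero_of_coprime_nsmul (hmn : m.Coprime n) {x : A} (hm : m • x = 0) (hn : n • x = 0) :
    x = 0 :=
  AddMonoid.addOrderOf_eq_one_iff.mp <| Nat.eq_one_of_dvd_coprimes hmn
    (addOrderOf_dvd_of_nsmul_eq_zero hm) (addOrderOf_dvd_of_nsmul_eq_zero hn)

theorem IsQuadratic.comp {q : D → AddCircle (2 : ℚ)} (hq : IsQuadratic q) (f : A →+ D) :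
    IsQuadratic (q ∘ f) := fun n x => by
  simp only [Function.comp_apply, map_zsmul, hq n]

theorem nondeg_of_two_nsmul_ne_zero {q : A → AddCircle (2 : ℚ)} (hq : IsQuadratic q)
    (h : ∀ x, x ≠ 0 → 2 • q x ≠ 0) : Nondeg q := fun x hx => by
  refine ⟨x, ?_⟩
  rw [← two_zsmul, hq]
  convert h x hx using 1
  norm_num
  abel

theorem coprod_bijective_of_coprime {f : A →+ D} {g : C →+ D} (hf : Function.Injective f)
    (hg : Function.Injective g) (hmn : m.Coprime n) (hA : ∀ a : A, m • a = 0)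
    (hC : ∀ c : C, n • c = 0) (hspan : ∀ y, ∃ a c, f a + g c = y) :
    Function.Bijective (f.coprod g) := by
  refine ⟨(injective_iff_map_eq_zero _).mpr fun ⟨a, c⟩ h => ?_, fun y => ?_⟩
  · rw [AddMonoidHom.coprod_apply, add_eq_zero_iff_eq_neg] at h
    have hgc : g c = 0 := eq_zero_of_coprime_nsmul hmn
      (by rw [← neg_eq_zero, ← smul_neg, ← h, ← map_nsmul, hA, map_zero])
      (by rw [← map_nsmul, hC, map_zero])
    rw [hgc, neg_zero] at h
    rw [(injective_iff_map_eq_zero f).mp hf a h, (injective_iff_map_eq_zero g).mp hg c hgc,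
      Prod.mk_zero_zero]
  · obtain ⟨a, c, rfl⟩ := hspan y
    exact ⟨(a, c), rfl⟩

theorem isometryGroup_neg (q : A → AddCircle (2 : ℚ)) :
    isometryGroup (fun a => -q a) = isometryGroup q :=
  Subgroup.ext fun _ => forall_congr' fun _ => neg_inj

noncomputable def isometryGroupCongr {qA : A → AddCircle (2 : ℚ)} {qD : D → AddCircle (2 : ℚ)}
    (e : A ≃+ D) (he : ∀ a, qD (e a) = qA a) : isometryGroup qA ≃* isometryGroup qD where
  toFun σ := ⟨.ofAdd (e.symm.trans ((Multiplicative.toAdd σ.1).trans e)), fun x => by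
    have hx := he (e.symm x)
    rw [e.apply_symm_apply] at hx
    simpa [he, hx] using σ.2 (e.symm x)⟩
  invFun σ := ⟨.ofAdd (e.trans ((Multiplicative.toAdd σ.1).trans e.symm)), fun x => by
    simpa [← he] using σ.2 (e x)⟩
  left_inv σ := by ext; simp
  right_inv σ := by ext; simp
  map_mul' σ τ := by ext; simp

section CoprimeProduct

variable {F : Type*} [FunLike F (A × C) (A × C)] [AddMonoidHomClass F (A × C) (A × C)]

theorem snd_apply_inl_eq_zero (hmn : m.Coprime n) (hA : ∀ a : A, m • a = 0)
    (hC : ∀ c : C, n • c = 0) (θ : F) (a : A) : (θ (a, 0)).2 = 0 :=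
  eq_zero_of_coprime_nsmul hmn (by rw [← Prod.smul_snd, ← map_nsmul, Prod.smul_mk, hA,
    smul_zero, Prod.mk_zero_zero, map_zero, Prod.snd_zero]) (hC _)

theorem fst_apply_inr_eq_zero (hmn : m.Coprime n) (hA : ∀ a : A, m • a = 0)
    (hC : ∀ c : C, n • c = 0) (θ : F) (c : C) : (θ (0, c)).1 = 0 :=
  eq_zero_of_coprime_nsmul hmn (hA _) (by rw [← Prod.smul_fst, ← map_nsmul, Prod.smul_mk, hC,
    smul_zero, Prod.mk_zero_zero, map_zero, Prod.fst_zero])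

end CoprimeProduct

def AddEquiv.restrictFst (θ : (A × C) ≃+ (A × C)) (h : ∀ a, (θ (a, 0)).2 = 0)
    (h' : ∀ a, (θ.symm (a, 0)).2 = 0) : A ≃+ A where
  toFun a := (θ (a, 0)).1
  invFun a := (θ.symm (a, 0)).1
  left_inv a := by
    change (θ.symm ((θ (a, 0)).1, 0)).1 = a
    rw [show ((θ (a, 0)).1, (0 : C)) = θ (a, 0) from Prod.ext rfl (h a).symm,
      θ.symm_apply_apply]
  right_inv a := by
    change (θ ((θ.symm (a, 0)).1, 0)).1 = a
    rw [show ((θ.symm (a, 0)).1, (0 : C)) = θ.symm (a, 0) from Prod.ext rfl (h' a).symm,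
      θ.apply_symm_apply]
  map_add' a b := by
    rw [← Prod.fst_add, ← map_add, Prod.mk_add_mk, add_zero]

def AddEquiv.restrictSnd (θ : (A × C) ≃+ (A × C)) (h : ∀ c, (θ (0, c)).1 = 0)
    (h' : ∀ c, (θ.symm (0, c)).1 = 0) : C ≃+ C where
  toFun c := (θ (0, c)).2
  invFun c := (θ.symm (0, c)).2
  left_inv c := by
    change (θ.symm (0, (θ (0, c)).2)).2 = c
    rw [show ((0 : A), (θ (0, c)).2) = θ (0, c) from Prod.ext (h c).symm rfl,
      θ.symm_apply_apply]
  right_inv c := by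
    change (θ (0, (θ.symm (0, c)).2)).2 = c
    rw [show ((0 : A), (θ.symm (0, c)).2) = θ.symm (0, c) from Prod.ext (h' c).symm rfl,
      θ.apply_symm_apply]
  map_add' c d := by
    rw [← Prod.snd_add, ← map_add, Prod.mk_add_mk, add_zero]

def isometryGroupProdHom (qA : A → AddCircle (2 : ℚ)) (qC : C → AddCircle (2 : ℚ)) :
    isometryGroup qA × isometryGroup qC →* isometryGroup (fun p : A × C => qA p.1 + qC p.2) where
  toFun τ := ⟨.ofAdd ((Multiplicative.toAdd τ.1.1).prodCongr (Multiplicative.toAdd τ.2.1)),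
    fun p => by
      change qA (Multiplicative.toAdd τ.1.1 p.1) + qC (Multiplicative.toAdd τ.2.1 p.2) = _
      rw [τ.1.2, τ.2.2]⟩
  map_one' := rfl
  map_mul' _ _ := rfl

theorem isometryGroupProdHom_apply (qA : A → AddCircle (2 : ℚ)) (qC : C → AddCircle (2 : ℚ))
    (τ : isometryGroup qA × isometryGroup qC) (p : A × C) :
    Multiplicative.toAdd (isometryGroupProdHom qA qC τ).1 p =
      (Multiplicative.toAdd τ.1.1 p.1, Multiplicative.toAdd τ.2.1 p.2) :=
  rfl

theorem isometryGroupProdHom_injective (qA : A → AddCircle (2 : ℚ))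
    (qC : C → AddCircle (2 : ℚ)) : Function.Injective (isometryGroupProdHom qA qC) := by
  intro τ υ h
  have h' := fun p => DFunLike.congr_fun (congrArg (Multiplicative.toAdd ∘ Subtype.val) h) p
  simp only [Function.comp_apply, isometryGroupProdHom_apply] at h'
  ext a
  · exact congrArg Prod.fst (h' (a, 0))
  · exact congrArg Prod.snd (h' (0, a))

theorem isometryGroupProdHom_surjective (hmn : m.Coprime n) (hA : ∀ a : A, m • a = 0)
    (hC : ∀ c : C, n • c = 0) (qA : A → AddCircle (2 : ℚ)) (qC : C → AddCircle (2 : ℚ)) :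
    Function.Surjective (isometryGroupProdHom qA qC) := by
  intro θ
  let φ := Multiplicative.toAdd θ.1
  have hA0 := snd_apply_inl_eq_zero hmn hA hC (F := (A × C) ≃+ (A × C))
  have hC0 := fst_apply_inr_eq_zero hmn hA hC (F := (A × C) ≃+ (A × C))
  let τ := φ.restrictFst (hA0 φ) (hA0 φ.symm)
  let υ := φ.restrictSnd (hC0 φ) (hC0 φ.symm)
  have hφ : ∀ p, φ p = (τ p.1, υ p.2) := fun p => by
    rw [show p = (p.1, 0) + (0, p.2) by simp, map_add]
    exact Prod.ext (by simp [τ, AddEquiv.restrictFst, hC0 φ])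
      (by simp [υ, AddEquiv.restrictSnd, hA0 φ])
  have hτ : ∀ a, qA (τ a) = qA a := fun a => by
    have h := θ.2 (a, 0)
    change qA (φ (a, 0)).1 + qC (φ (a, 0)).2 = _ at h
    simpa [hφ] using h
  have hυ : ∀ c, qC (υ c) = qC c := fun c => by
    have h := θ.2 (0, c)
    change qA (φ (0, c)).1 + qC (φ (0, c)).2 = _ at h
    simpa [hφ] using h
  exact ⟨(⟨.ofAdd τ, hτ⟩, ⟨.ofAdd υ, hυ⟩), Subtype.ext <| AddEquiv.ext fun p => (hφ p).symm⟩

noncomputable def isometryGroupProd (hmn : m.Coprime n) (hA : ∀ a : A, m • a = 0)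
    (hC : ∀ c : C, n • c = 0) (qA : A → AddCircle (2 : ℚ)) (qC : C → AddCircle (2 : ℚ)) :
    isometryGroup qA × isometryGroup qC ≃* isometryGroup (fun p : A × C => qA p.1 + qC p.2) :=
  .ofBijective (isometryGroupProdHom qA qC)
    ⟨isometryGroupProdHom_injective qA qC, isometryGroupProdHom_surjective hmn hA hC qA qC⟩

theorem exists_addEquiv_prod_of_coprime {f : A →+ D} {g : C →+ D} {qA : A → AddCircle (2 : ℚ)}
    {qD : D → AddCircle (2 : ℚ)} (hf : Function.Injective f) (hg : Function.Injective g)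
    (hmn : m.Coprime n) (hA : ∀ a : A, m • a = 0) (hC : ∀ c : C, n • c = 0)
    (hspan : ∀ y, ∃ a c, f a + g c = y) (hfq : ∀ a, qD (f a) = -qA a)
    (hadd : ∀ u w : D, m • u = 0 → n • w = 0 → qD (u + w) = qD u + qD w) :
    ∃ σ : D ≃+ A × C, (∀ y, -qA (σ y).1 + qD (g (σ y).2) = qD y) ∧
      Nonempty (isometryGroup qD ≃* isometryGroup qA × isometryGroup (qD ∘ g)) := by
  let F := AddEquiv.ofBijective (f.coprod g) (coprod_bijective_of_coprime hf hg hmn hA hC hspan)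
  have hF : ∀ p, qD (F p) = -qA p.1 + qD (g p.2) := fun p => by
    change qD (f p.1 + g p.2) = _
    rw [← hfq]
    exact hadd _ _ (by rw [← map_nsmul, hA, map_zero]) (by rw [← map_nsmul, hC, map_zero])
  refine ⟨F.symm, fun y => (hF _).symm.trans (congrArg qD (F.apply_symm_apply y)), ⟨?_⟩⟩
  exact (isometryGroupCongr F hF).symm.trans <|
    (isometryGroupProd hmn hA hC (-qA ·) (qD ∘ g)).symm.trans <|
      MulEquiv.prodCongr (MulEquiv.subgroupCongr (isometryGroup_neg qA)) (MulEquiv.refl _)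

end FiniteQuadraticModule

section Gluing

variable {G A D : Type*} [AddCommGroup G] [Module ℤ G] [AddCommGroup A] [AddCommGroup D]
  {L : Submodule ℤ G}

theorem exists_mem_apply_eq_of_coprime {m n : ℕ} (hmn : m.Coprime n) (hA : ∀ a : A, m • a = 0)
    (hL : ∀ x, n • x ∈ L) (d : G →+ A) (hd : Function.Surjective d) (a : A) :
    ∃ x ∈ L, d x = a := by
  obtain ⟨x, rfl⟩ := hd a
  obtain ⟨u, v, huv⟩ := Nat.isCoprime_iff_coprime.mpr hmn
  refine ⟨v • n • x, zsmul_mem (hL x) v, ?_⟩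
  calc d (v • n • x) = u • (m • d x) + v • n • d x := by
        rw [hA, smul_zero, zero_add, map_zsmul, map_nsmul]
    _ = d x := by
        rw [← natCast_zsmul, ← natCast_zsmul, smul_smul, smul_smul, ← add_smul, huv, one_smul]

theorem exists_injective_glue (d₁ : G →+ A) (d₂ : G →+ D) (hd₁ : ∀ a, ∃ x ∈ L, d₁ x = a)
    (hker : ∀ x ∈ L, d₁ x = 0 ↔ d₂ x = 0) (hmem : ∀ x, d₁ x = 0 → d₂ x = 0 → x ∈ L) :
    ∃ f : A →+ D, Function.Injective f ∧ ∃ g : G ⧸ L →+ D, Function.Injective g ∧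
      ∀ x, f (d₁ x) + g (Submodule.Quotient.mk x) = d₂ x := by
  let e₁ := d₁.comp L.subtype.toAddMonoidHom
  have he₁ : Function.Surjective e₁ := fun a =>
    let ⟨x, hx, h⟩ := hd₁ a
    ⟨⟨x, hx⟩, h⟩
  let f := e₁.liftOfSurjective he₁ ⟨d₂.comp L.subtype.toAddMonoidHom, fun x hx =>
    (hker x x.2).mp hx⟩
  have hf : ∀ x ∈ L, f (d₁ x) = d₂ x := fun x hx =>
    e₁.liftOfRightInverse_comp_apply _ _ _ ⟨x, hx⟩
  have hfinj : Function.Injective f := (injective_iff_map_eq_zero f).mpr fun a ha => by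
    obtain ⟨x, hx, rfl⟩ := hd₁ a
    exact (hker x hx).mpr (hf x hx ▸ ha)
  let g₀ := d₂ - f.comp d₁
  have hg₀ : ∀ x, g₀ x = 0 ↔ x ∈ L := fun x => by
    refine ⟨fun h => ?_, fun hx => by simp [g₀, hf x hx]⟩
    obtain ⟨y, hy, hxy⟩ := hd₁ (d₁ x)
    have h₂ : d₂ x = d₂ y := by
      rw [← hf y hy, hxy]
      exact sub_eq_zero.mp h
    simpa using L.add_mem (hmem (x - y) (by simp [hxy]) (by simp [h₂])) hy
  refine ⟨f, hfinj, QuotientAddGroup.lift L.toAddSubgroup g₀ fun x hx => (hg₀ x).mpr hx,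
    (injective_iff_map_eq_zero _).mpr fun z hz => ?_, fun x => ?_⟩
  · obtain ⟨x, rfl⟩ := Submodule.Quotient.mk_surjective L z
    exact (Submodule.Quotient.mk_eq_zero L).mpr ((hg₀ x).mp hz)
  · change f (d₁ x) + g₀ x = d₂ x
    simp [g₀]

end Gluing

theorem Rat.exists_eq_intCast_of_coprime {m n : ℕ} (hmn : m.Coprime n) {r : ℚ}
    (hm : ∃ k : ℤ, m * r = k) (hn : ∃ k : ℤ, n * r = k) : ∃ k : ℤ, r = k := by
  obtain ⟨a, b, hab⟩ := Nat.isCoprime_iff_coprime.mpr hmn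
  obtain ⟨k₁, hk₁⟩ := hm
  obtain ⟨k₂, hk₂⟩ := hn
  have hab' : (a : ℚ) * m + b * n = 1 := by exact_mod_cast hab
  exact ⟨a * k₁ + b * k₂, by push_cast; linear_combination (-r) * hab' + a * hk₁ + b * hk₂⟩

theorem AddCircle.coe_two_mul_intCast_eq_zero (k : ℤ) :
    ((2 * k : ℚ) : AddCircle (2 : ℚ)) = 0 :=
  (AddCircle.coe_eq_zero_iff 2).mpr ⟨k, by rw [zsmul_eq_mul, mul_comm]⟩

theorem AddCircle.two_nsmul_coe_eq_zero_iff {r : ℚ} :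
    2 • (r : AddCircle (2 : ℚ)) = 0 ↔ ∃ k : ℤ, r = k := by
  rw [← AddCircle.coe_nsmul, AddCircle.coe_eq_zero_iff]
  refine exists_congr fun k => ?_
  rw [zsmul_eq_mul, nsmul_eq_mul, Nat.cast_ofNat, mul_comm, mul_right_inj' two_ne_zero, eq_comm]

section Lattice

variable {V : Type u} [AddCommGroup V] [Module ℚ V] {B : BilinForm ℚ V} {Λ W : Submodule ℤ V}

theorem mem_dualLat_iff {x : V} :
    x ∈ dualLat B W ↔ (∀ y ∈ W, ∃ k : ℤ, B x y = k) ∧ x ∈ Submodule.span ℚ (W : Set V) := by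
  simp only [dualLat, Submodule.mem_inf, Submodule.restrictScalars_mem,
    LinearMap.BilinForm.mem_dualSubmodule, Submodule.mem_one, algebraMap_int_eq, eq_intCast]
  exact and_congr_left' <| forall₂_congr fun _ _ => exists_congr fun _ => eq_comm

theorem discGroup.mk_eq_zero (x : dualLat B W) :
    (Submodule.Quotient.mk x : discGroup B W) = 0 ↔ (x : V) ∈ W :=
  Submodule.Quotient.mk_eq_zero _

theorem exists_int_smul_mem_of_mem_span {v : V} (hv : v ∈ Submodule.span ℚ (W : Set V)) :
    ∃ n : ℤ, n ≠ 0 ∧ (n : ℚ) • v ∈ W := by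
  induction hv using Submodule.span_induction with
  | mem x hx => exact ⟨1, one_ne_zero, by simpa using hx⟩
  | zero => exact ⟨1, one_ne_zero, by simp⟩
  | add x y _ _ hx hy =>
    obtain ⟨n, hn, hnx⟩ := hx
    obtain ⟨k, hk, hky⟩ := hy
    refine ⟨n * k, mul_ne_zero hn hk, ?_⟩
    have : ((n * k : ℤ) : ℚ) • (x + y) = k • ((n : ℚ) • x) + n • ((k : ℚ) • y) := by
      simp only [← Int.cast_smul_eq_zsmul ℚ, smul_add, smul_smul, Int.cast_mul, mul_comm]
    rw [this]
    exact W.add_mem (W.smul_mem _ hnx) (W.smul_mem _ hky)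
  | smul q x _ hx =>
    obtain ⟨n, hn, hnx⟩ := hx
    refine ⟨q.den * n, mul_ne_zero (by exact_mod_cast q.den_nz) hn, ?_⟩
    have : ((q.den * n : ℤ) : ℚ) • (q • x) = q.num • ((n : ℚ) • x) := by
      rw [← Int.cast_smul_eq_zsmul ℚ, smul_smul, smul_smul, ← Rat.mul_den_eq_num]
      push_cast
      ring_nf
    rw [this]
    exact W.smul_mem _ hnx

theorem span_inf_restrictScalars (hfull : Submodule.span ℚ (Λ : Set V) = ⊤)
    (U : Submodule ℚ V) :
    Submodule.span ℚ ((Λ ⊓ U.restrictScalars ℤ : Submodule ℤ V) : Set V) = U := by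
  refine le_antisymm (Submodule.span_le.mpr fun v hv => hv.2) fun v hv => ?_
  obtain ⟨n, hn, hnv⟩ := exists_int_smul_mem_of_mem_span (hfull ▸ Submodule.mem_top : v ∈ _)
  have hv' : ((n : ℚ)⁻¹ • (n : ℚ) • v) = v := inv_smul_smul₀ (by exact_mod_cast hn) v
  rw [← hv']
  exact Submodule.smul_mem _ _ (Submodule.subset_span ⟨hnv, U.smul_mem _ hv⟩)

theorem exists_basis_span_eq (hfg : Λ.FG) (hfull : Submodule.span ℚ (Λ : Set V) = ⊤) :
    ∃ (ι : Type u) (_ : Finite ι) (b : Module.Basis ι ℚ V),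
      Submodule.span ℤ (Set.range b) = Λ := by
  have : Module.IsTorsionFree ℤ V := .trans_faithfulSMul ℤ ℚ V
  have : Module.Finite ℤ Λ := Module.Finite.iff_fg.mpr hfg
  let b := Module.Free.chooseBasis ℤ Λ
  have hspan : Submodule.span ℤ (Set.range (Λ.subtype ∘ b)) = Λ := by
    rw [Set.range_comp, Submodule.span_image, b.span_eq, Submodule.map_subtype_top]
  have hli : LinearIndependent ℚ (Λ.subtype ∘ b) :=
    (LinearIndependent.iff_fractionRing ℤ ℚ).mp
      (b.linearIndependent.map' Λ.subtype (Submodule.ker_subtype Λ))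
  have hsp : ⊤ ≤ Submodule.span ℚ (Set.range (Λ.subtype ∘ b)) := by
    rw [← hfull, Submodule.span_le]
    exact fun x hx => Submodule.span_le_restrictScalars ℤ ℚ _ (hspan.symm ▸ hx)
  exact ⟨_, inferInstance, .mk hli hsp, by rw [Module.Basis.coe_mk, hspan]⟩

theorem eq_zero_of_forall_smul_mem (hfg : Λ.FG) (hfull : Submodule.span ℚ (Λ : Set V) = ⊤)
    {v : V} (h : ∀ q : ℚ, q • v ∈ Λ) : v = 0 := by
  obtain ⟨ι, _, b, hb⟩ := exists_basis_span_eq hfg hfull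
  by_contra hv
  obtain ⟨i, hi⟩ : ∃ i, b.repr v i ≠ 0 := by
    by_contra! h0
    exact hv (b.repr.injective (Finsupp.ext h0 |>.trans (map_zero _).symm))
  obtain ⟨k, hk⟩ := (b.mem_span_iff_repr_mem ℤ _).mp (hb ▸ h (2 * b.repr v i)⁻¹) i
  rw [map_smul, Finsupp.smul_apply, smul_eq_mul, algebraMap_int_eq, eq_intCast] at hk
  have : (k : ℚ) * 2 = 1 := by rw [hk]; field_simp
  have : k * 2 = 1 := by exact_mod_cast this
  omega

/-- If `A_W` is finite, a vector of `span W` orthogonal to `span W` has all its rational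
multiples in `W`, so it vanishes. -/
theorem restrict_span_nondegenerate (hfg : Λ.FG) (hfull : Submodule.span ℚ (Λ : Set V) = ⊤)
    (hWΛ : W ≤ Λ) [FiniteDimensional ℚ V] [Finite (discGroup B W)] :
    (B.restrict (Submodule.span ℚ (W : Set V))).Nondegenerate := by
  refine LinearMap.BilinForm.Nondegenerate.ofSeparatingLeft fun v hv => Subtype.ext ?_
  have hm : (Nat.card (discGroup B W) : ℚ) ≠ 0 := by exact_mod_cast Nat.card_pos.ne'
  refine eq_zero_of_forall_smul_mem hfg hfull fun q => hWΛ ?_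
  have hdual : (q / Nat.card (discGroup B W)) • (v : V) ∈ dualLat B W :=
    mem_dualLat_iff.mpr ⟨fun y hy => ⟨0, by
      simpa using congrArg (q / Nat.card (discGroup B W) * ·) (hv ⟨y, Submodule.subset_span hy⟩)⟩,
      Submodule.smul_mem _ _ v.2⟩
  have h := card_nsmul_eq_zero' (x := (Submodule.Quotient.mk ⟨_, hdual⟩ : discGroup B W))
  rw [← Submodule.Quotient.mk_smul, discGroup.mk_eq_zero] at h
  convert h using 1
  rw [AddSubmonoidClass.coe_nsmul, ← Nat.cast_smul_eq_nsmul ℚ, smul_smul, mul_div_cancel₀ _ hm]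

theorem exists_eq_on_lattice [FiniteDimensional ℚ V] (hnd : B.Nondegenerate) (hfg : Λ.FG)
    (hfull : Submodule.span ℚ (Λ : Set V) = ⊤) (ℓ : Λ →ₗ[ℤ] ℚ) :
    ∃ x : V, ∀ y : Λ, B x y = ℓ y := by
  obtain ⟨ι, _, b, hb⟩ := exists_basis_span_eq hfg hfull
  have hbΛ : ∀ i, b i ∈ Λ := fun i => hb ▸ Submodule.subset_span ⟨i, rfl⟩
  let L : Module.Dual ℚ V := b.constr ℚ fun i => ℓ ⟨b i, hbΛ i⟩
  suffices h : ∀ y ∈ Submodule.span ℤ (Set.range b), ∀ hy : y ∈ Λ, L y = ℓ ⟨y, hy⟩ from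
    ⟨(B.toDual hnd).symm L, fun ⟨y, hy⟩ => by
      rw [LinearMap.BilinForm.apply_toDual_symm_apply]
      exact h y (hb ▸ hy) hy⟩
  intro y hy
  induction hy using Submodule.span_induction with
  | mem y hy =>
    obtain ⟨i, rfl⟩ := hy
    exact fun _ => b.constr_basis ℚ _ i
  | zero => exact fun _ => (map_zero L).trans (map_zero ℓ).symm
  | add y z hy hz ihy ihz =>
    intro _
    rw [map_add, ihy (hb ▸ hy), ihz (hb ▸ hz), ← map_add]
    rfl
  | smul k y hy ihy =>
    intro _
    rw [map_zsmul, ihy (hb ▸ hy), ← map_zsmul]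
    rfl

theorem exists_retraction (hfg : Λ.FG) (U : Submodule ℚ V) :
    ∃ r : Λ →ₗ[ℤ] Λ, (∀ y, (r y : V) ∈ U) ∧ ∀ y : Λ, (y : V) ∈ U → r y = y := by
  let U' := (U.restrictScalars ℤ).comap Λ.subtype
  have : Module.IsTorsionFree ℤ (Λ ⧸ U') := .of_smul_eq_zero fun c y hcy => by
    obtain ⟨y, rfl⟩ := Submodule.Quotient.mk_surjective _ y
    rw [← Submodule.Quotient.mk_smul, Submodule.Quotient.mk_eq_zero] at hcy
    refine or_iff_not_imp_left.mpr fun hc => (Submodule.Quotient.mk_eq_zero _).mpr ?_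
    change (c • (y : V)) ∈ U at hcy
    rw [← Int.cast_smul_eq_zsmul ℚ] at hcy
    show (y : V) ∈ U
    simpa [hc] using U.smul_mem (c : ℚ)⁻¹ hcy
  have : Module.Finite ℤ Λ := Module.Finite.iff_fg.mpr hfg
  obtain ⟨s, hs⟩ := Module.projective_lifting_property U'.mkQ LinearMap.id U'.mkQ_surjective
  refine ⟨LinearMap.id - s ∘ₗ U'.mkQ, fun y => ?_, fun y hy => ?_⟩
  · have : U'.mkQ (y - s (U'.mkQ y)) = 0 := by
      rw [map_sub, ← LinearMap.comp_apply U'.mkQ s, hs, LinearMap.id_apply, sub_self]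
    exact (Submodule.Quotient.mk_eq_zero U').mp this
  · have : U'.mkQ y = 0 := (Submodule.Quotient.mk_eq_zero _).mpr hy
    simp [this]

theorem exists_mem_dualLat_sub_orthogonal [FiniteDimensional ℚ V] (hnd : B.Nondegenerate)
    (hfg : Λ.FG) (hfull : Submodule.span ℚ (Λ : Set V) = ⊤) (U : Submodule ℚ V) {w : V}
    (hw : w ∈ dualLat B (Λ ⊓ U.restrictScalars ℤ)) :
    ∃ x ∈ dualLat B Λ, ∀ u ∈ U, B (x - w) u = 0 := by
  obtain ⟨r, hrU, hr⟩ := exists_retraction hfg U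
  obtain ⟨x, hx⟩ :=
    exists_eq_on_lattice hnd hfg hfull ((B w).restrictScalars ℤ ∘ₗ Λ.subtype ∘ₗ r)
  refine ⟨x, mem_dualLat_iff.mpr ⟨fun y hy => ?_, hfull ▸ Submodule.mem_top⟩, fun u hu => ?_⟩
  · rw [hx ⟨y, hy⟩]
    exact (mem_dualLat_iff.mp hw).1 _ ⟨(r _).2, hrU _⟩
  · have hU : U ≤ LinearMap.ker (B (x - w)) := by
      rw [← span_inf_restrictScalars hfull U, Submodule.span_le]
      rintro y ⟨hyΛ, hyU⟩
      have := hx ⟨y, hyΛ⟩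
      simp_all
    exact hU hu

theorem mem_of_forall_mem_dualLat (hsym : ∀ x y, B x y = B y x) (hnd : B.Nondegenerate)
    (hfg : Λ.FG) (hfull : Submodule.span ℚ (Λ : Set V) = ⊤) {x : V}
    (h : ∀ y ∈ dualLat B Λ, ∃ k : ℤ, B x y = k) : x ∈ Λ := by
  obtain ⟨ι, _, b, hb⟩ := exists_basis_span_eq hfg hfull
  have hflip : B.flip = B := LinearMap.ext₂ fun x y => hsym y x
  have hdd := LinearMap.BilinForm.dualSubmodule_dualSubmodule_flip_of_basis (R := ℤ) B hnd b
  rw [hflip, hb] at hdd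
  rw [← hdd, LinearMap.BilinForm.mem_dualSubmodule]
  intro y hy
  rw [LinearMap.BilinForm.mem_dualSubmodule] at hy
  have hy' : y ∈ dualLat B Λ := mem_dualLat_iff.mpr ⟨fun z hz => by
    obtain ⟨k, hk⟩ := Submodule.mem_one.mp (hy z hz)
    exact ⟨k, by simp [← hk]⟩, hfull ▸ Submodule.mem_top⟩
  obtain ⟨k, hk⟩ := h y hy'
  exact Submodule.mem_one.mpr ⟨k, by simp [hk]⟩

variable {q : discGroup B W → AddCircle (2 : ℚ)}

theorem isQuadratic_of_discForm
    (hq : ∀ x : dualLat B W, q (Submodule.Quotient.mk x) = ((B x x : ℚ) : AddCircle (2 : ℚ))) :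
    IsQuadratic q := by
  intro n y
  obtain ⟨x, rfl⟩ := Submodule.Quotient.mk_surjective _ y
  rw [← Submodule.Quotient.mk_smul, hq, hq, ← AddCircle.coe_zsmul]
  congr 1
  simp only [SetLike.val_smul, map_zsmul, LinearMap.smul_apply, smul_smul, sq]

theorem discForm_add_of_coprime (hsym : ∀ x y, B x y = B y x)
    (hq : ∀ x : dualLat B W, q (Submodule.Quotient.mk x) = ((B x x : ℚ) : AddCircle (2 : ℚ)))
    {m n : ℕ} (hmn : m.Coprime n) {u w : discGroup B W} (hu : m • u = 0) (hw : n • w = 0) :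
    q (u + w) = q u + q w := by
  obtain ⟨x, rfl⟩ := Submodule.Quotient.mk_surjective _ u
  obtain ⟨y, rfl⟩ := Submodule.Quotient.mk_surjective _ w
  rw [← Submodule.Quotient.mk_smul, discGroup.mk_eq_zero] at hu hw
  obtain ⟨k, hk⟩ : ∃ k : ℤ, B x y = k := by
    refine Rat.exists_eq_intCast_of_coprime hmn ?_ ?_
    · obtain ⟨k, hk⟩ := (mem_dualLat_iff.mp y.2).1 _ hu
      exact ⟨k, by simpa [← Nat.cast_smul_eq_nsmul ℚ, hsym y.1] using hk⟩
    · obtain ⟨k, hk⟩ := (mem_dualLat_iff.mp x.2).1 _ hw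
      exact ⟨k, by simpa [← Nat.cast_smul_eq_nsmul ℚ] using hk⟩
  rw [← Submodule.Quotient.mk_add, hq, hq, hq, ← AddCircle.coe_add]
  have hxy : B (x + y : V) (x + y : V) = B x x + B y y + 2 * k := by
    simp only [map_add, LinearMap.add_apply, hsym y.1 x.1, hk]
    ring
  rw [Submodule.coe_add, hxy, AddCircle.coe_add, AddCircle.coe_two_mul_intCast_eq_zero, add_zero]


end Lattice

section OrthogonalSplitting

variable {V : Type u} [AddCommGroup V] [Module ℚ V] {B : BilinForm ℚ V} {Λ T N : Submodule ℤ V}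
  {U U' : Submodule ℚ V}

theorem apply_self_eq_projection_add_projection (hc : IsCompl U U') (hsym : ∀ x y, B x y = B y x)
    (hUU' : ∀ u ∈ U, ∀ u' ∈ U', B u u' = 0) (x : V) :
    B x x = B (U.projection U' hc x) (U.projection U' hc x) +
      B (U'.projection U hc.symm x) (U'.projection U hc.symm x) := by
  conv_lhs => rw [← Submodule.projection_add_projection_eq_self hc x]
  have h := hUU' _ (Submodule.projection_apply_mem hc x) _
    (Submodule.projection_apply_mem hc.symm x)
  simp only [map_add, LinearMap.add_apply, h, hsym (U'.projection U hc.symm x)]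
  ring

theorem projection_mem_dualLat (hc : IsCompl U U') (hsym : ∀ x y, B x y = B y x)
    (hUU' : ∀ u ∈ U, ∀ u' ∈ U', B u u' = 0) (hfull : Submodule.span ℚ (Λ : Set V) = ⊤)
    {x : V} (hx : x ∈ dualLat B Λ) :
    U.projection U' hc x ∈ dualLat B (Λ ⊓ U.restrictScalars ℤ) := by
  rw [mem_dualLat_iff, span_inf_restrictScalars hfull]
  refine ⟨fun y ⟨hyΛ, hyU⟩ => ?_, Submodule.projection_apply_mem hc x⟩
  obtain ⟨k, hk⟩ := (mem_dualLat_iff.mp hx).1 y hyΛ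
  refine ⟨k, ?_⟩
  rw [← hk, eq_comm, ← sub_eq_zero, ← LinearMap.sub_apply, ← map_sub,
    ← Submodule.projection_eq_self_sub_projection, hsym]
  exact hUU' y hyU _ (Submodule.projection_apply_mem hc.symm x)

theorem mem_of_forall_orthogonal (hc : IsCompl U U') (hsym : ∀ x y, B x y = B y x)
    (hnd : B.Nondegenerate) (hUU' : ∀ u ∈ U, ∀ u' ∈ U', B u u' = 0) {v : V}
    (hv : ∀ u ∈ U, B v u = 0) : v ∈ U' := by
  rw [← Submodule.projection_apply_eq_zero_iff hc]
  refine hnd.1 _ fun y => ?_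
  set P := U.projection U' hc
  set P' := U'.projection U hc.symm
  have hPU : ∀ z, P z ∈ U := Submodule.projection_apply_mem hc
  have hP'U' : ∀ z, P' z ∈ U' := Submodule.projection_apply_mem hc.symm
  calc B (P v) y = B (P v) (P y) + B (P v) (P' y) := by
        rw [← map_add, Submodule.projection_add_projection_eq_self]
    _ = B v (P y) - B (P y) (P' v) + B (P v) (P' y) := by
        rw [Submodule.projection_eq_self_sub_projection hc.symm, map_sub, LinearMap.sub_apply,
          hsym (P' v)]
    _ = 0 := by rw [hv _ (hPU y), hUU' _ (hPU y) _ (hP'U' v), hUU' _ (hPU v) _ (hP'U' y)]; simp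

theorem exists_projection_eq [FiniteDimensional ℚ V] (hc : IsCompl U U')
    (hsym : ∀ x y, B x y = B y x) (hnd : B.Nondegenerate) (hfg : Λ.FG)
    (hfull : Submodule.span ℚ (Λ : Set V) = ⊤)
    (hUU' : ∀ u ∈ U, ∀ u' ∈ U', B u u' = 0) {w : V}
    (hw : w ∈ dualLat B (Λ ⊓ U.restrictScalars ℤ)) :
    ∃ x ∈ dualLat B Λ, U.projection U' hc x = w := by
  obtain ⟨x, hx, hxw⟩ := exists_mem_dualLat_sub_orthogonal hnd hfg hfull U hw
  have hwU : w ∈ U := span_inf_restrictScalars hfull U ▸ (mem_dualLat_iff.mp hw).2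
  refine ⟨x, hx, ?_⟩
  rw [← sub_add_cancel x w, map_add,
    (Submodule.projection_apply_eq_zero_iff hc).mpr (mem_of_forall_orthogonal hc hsym hnd hUU' hxw),
    zero_add, Submodule.projection_apply_of_mem_left hc hwU]

noncomputable def projDiscGroup (hc : IsCompl U U') (hsym : ∀ x y, B x y = B y x)
    (hUU' : ∀ u ∈ U, ∀ u' ∈ U', B u u' = 0) (hfull : Submodule.span ℚ (Λ : Set V) = ⊤) :
    dualLat B Λ →+ discGroup B (Λ ⊓ U.restrictScalars ℤ) where
  toFun x := Submodule.Quotient.mk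
    ⟨U.projection U' hc x, projection_mem_dualLat hc hsym hUU' hfull x.2⟩
  map_zero' := by simp only [ZeroMemClass.coe_zero, map_zero]; rfl
  map_add' x y := by
    rw [← Submodule.Quotient.mk_add]
    congr 1
    exact Subtype.ext (map_add _ (x : V) y)

section ProjDiscGroup

variable (hc : IsCompl U U') (hsym : ∀ x y, B x y = B y x)
  (hUU' : ∀ u ∈ U, ∀ u' ∈ U', B u u' = 0) (hfull : Submodule.span ℚ (Λ : Set V) = ⊤)

theorem projDiscGroup_eq_zero_iff (x : dualLat B Λ) :
    projDiscGroup hc hsym hUU' hfull x = 0 ↔ U.projection U' hc x ∈ Λ :=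
  (discGroup.mk_eq_zero _).trans <| and_iff_left (Submodule.projection_apply_mem hc _)

theorem projDiscGroup_surjective [FiniteDimensional ℚ V] (hnd : B.Nondegenerate) (hfg : Λ.FG) :
    Function.Surjective (projDiscGroup hc hsym hUU' hfull) := fun a => by
  obtain ⟨w, rfl⟩ := Submodule.Quotient.mk_surjective _ a
  obtain ⟨x, hx, hxw⟩ := exists_projection_eq hc hsym hnd hfg hfull hUU' w.2
  exact ⟨⟨x, hx⟩, congrArg Submodule.Quotient.mk (Subtype.ext hxw)⟩

theorem discForm_projDiscGroup {q : discGroup B (Λ ⊓ U.restrictScalars ℤ) → AddCircle (2 : ℚ)}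
    (hq : ∀ x : dualLat B (Λ ⊓ U.restrictScalars ℤ),
      q (Submodule.Quotient.mk x) = ((B x x : ℚ) : AddCircle (2 : ℚ)))
    (x : dualLat B Λ) :
    q (projDiscGroup hc hsym hUU' hfull x) =
      ((B (U.projection U' hc x) (U.projection U' hc x) : ℚ) : AddCircle (2 : ℚ)) :=
  hq _

end ProjDiscGroup

theorem discForm_projDiscGroup_add (hc : IsCompl U U') (hsym : ∀ x y, B x y = B y x)
    (hUU' : ∀ u ∈ U, ∀ u' ∈ U', B u u' = 0) (hU'U : ∀ u' ∈ U', ∀ u ∈ U, B u' u = 0)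
    (hfull : Submodule.span ℚ (Λ : Set V) = ⊤)
    {qT : discGroup B (Λ ⊓ U.restrictScalars ℤ) → AddCircle (2 : ℚ)}
    (hqT : ∀ x : dualLat B (Λ ⊓ U.restrictScalars ℤ),
      qT (Submodule.Quotient.mk x) = ((B x x : ℚ) : AddCircle (2 : ℚ)))
    {qN : discGroup B (Λ ⊓ U'.restrictScalars ℤ) → AddCircle (2 : ℚ)}
    (hqN : ∀ x : dualLat B (Λ ⊓ U'.restrictScalars ℤ),
      qN (Submodule.Quotient.mk x) = ((B x x : ℚ) : AddCircle (2 : ℚ)))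
    (x : dualLat B Λ) :
    qT (projDiscGroup hc hsym hUU' hfull x) + qN (projDiscGroup hc.symm hsym hU'U hfull x) =
      ((B x x : ℚ) : AddCircle (2 : ℚ)) := by
  rw [discForm_projDiscGroup hc hsym hUU' hfull hqT, discForm_projDiscGroup _ _ _ _ hqN,
    ← AddCircle.coe_add, ← apply_self_eq_projection_add_projection hc hsym hUU']

/-- Every nonzero class `[x]` generates `A_Λ`, so `B(x, x) ∈ ℤ` would make `x` integral
against all of `Λ^∨`, i.e. `x ∈ Λ^∨^∨ = Λ`. -/
theorem two_nsmul_coe_ne_zero_of_prime_card (hsym : ∀ x y, B x y = B y x)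
    (hnd : B.Nondegenerate) (hfg : Λ.FG) (hfull : Submodule.span ℚ (Λ : Set V) = ⊤) (hp : (Nat.card (discGroup B Λ)).Prime)
    {x : dualLat B Λ} (hx : (x : V) ∉ Λ) : 2 • ((B x x : ℚ) : AddCircle (2 : ℚ)) ≠ 0 := by
  intro h
  obtain ⟨k, hk⟩ := AddCircle.two_nsmul_coe_eq_zero_iff.mp h
  have : Fact (Nat.card (discGroup B Λ)).Prime := ⟨hp⟩
  refine hx (mem_of_forall_mem_dualLat hsym hnd hfg hfull fun y hy => ?_)
  have hx0 : (Submodule.Quotient.mk x : discGroup B Λ) ≠ 0 := (discGroup.mk_eq_zero x).not.mpr hx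
  obtain ⟨c, hc⟩ := AddSubgroup.mem_zmultiples_iff.mp
    (mem_zmultiples_of_prime_card rfl hx0 (g' := Submodule.Quotient.mk ⟨y, hy⟩))
  rw [← Submodule.Quotient.mk_smul, Submodule.Quotient.eq] at hc
  obtain ⟨k', hk'⟩ := (mem_dualLat_iff.mp x.2).1 _ (neg_mem hc)
  refine ⟨c * k + k', ?_⟩
  simp only [neg_sub, Submodule.subtype_apply, map_sub, map_zsmul, hk, zsmul_eq_mul] at hk'
  push_cast
  linarith

theorem exists_discGroup_glue [FiniteDimensional ℚ V] (hsym : ∀ x y, B x y = B y x)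
    (hnd : B.Nondegenerate) (hfg : Λ.FG) (hfull : Submodule.span ℚ (Λ : Set V) = ⊤)
    (heven : ∀ x ∈ Λ, ∃ k : ℤ, B x x = 2 * (k : ℚ)) (hc : IsCompl U U')
    (hUU' : ∀ u ∈ U, ∀ u' ∈ U', B u u' = 0) (hT : T = Λ ⊓ U.restrictScalars ℤ)
    (hN : N = Λ ⊓ U'.restrictScalars ℤ)
    (hcop : (Nat.card (discGroup B T)).Coprime (Nat.card (discGroup B Λ)))
    {qT : discGroup B T → AddCircle (2 : ℚ)}
    (hqT : ∀ x : dualLat B T, qT (Submodule.Quotient.mk x) = ((B x x : ℚ) : AddCircle (2 : ℚ)))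
    {qN : discGroup B N → AddCircle (2 : ℚ)}
    (hqN : ∀ x : dualLat B N, qN (Submodule.Quotient.mk x) = ((B x x : ℚ) : AddCircle (2 : ℚ))) :
    ∃ f : discGroup B T →+ discGroup B N, Function.Injective f ∧ (∀ a, qN (f a) = -qT a) ∧
      ∃ g : discGroup B Λ →+ discGroup B N, Function.Injective g ∧
        (∀ x : dualLat B Λ, qN (g (Submodule.Quotient.mk x)) = ((B x x : ℚ) : AddCircle (2 : ℚ))) ∧
        ∀ y, ∃ a z, f a + g z = y := by
  subst hT hN
  have hU'U : ∀ u' ∈ U', ∀ u ∈ U, B u' u = 0 := fun u' hu' u hu => hsym u u' ▸ hUU' u hu u' hu'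
  set d₁ := projDiscGroup hc hsym hUU' hfull
  set d₂ := projDiscGroup hc.symm hsym hU'U hfull
  set L := Submodule.comap (dualLat B Λ).subtype Λ
  have hadd := Submodule.projection_add_projection_eq_self hc
  have hnL : ∀ x : dualLat B Λ, Nat.card (discGroup B Λ) • x ∈ L := fun x =>
    (discGroup.mk_eq_zero (B := B) (W := Λ) (Nat.card (discGroup B Λ) • x)).mp <| by
      rw [Submodule.Quotient.mk_smul, card_nsmul_eq_zero']
  have hd₁ : ∀ a, ∃ x ∈ L, d₁ x = a :=
    exists_mem_apply_eq_of_coprime hcop (fun _ => card_nsmul_eq_zero') hnL d₁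
      (projDiscGroup_surjective hc hsym hUU' hfull hnd hfg)
  obtain ⟨f, hf, g, hg, hglue⟩ := exists_injective_glue d₁ d₂ hd₁
    (fun x (hx : (x : V) ∈ Λ) => by
      rw [projDiscGroup_eq_zero_iff, projDiscGroup_eq_zero_iff]
      rw [← hadd x] at hx
      exact ⟨fun h => (add_mem_cancel_left h).mp hx, fun h => (add_mem_cancel_right h).mp hx⟩)
    (fun x h₁ h₂ => by
      rw [projDiscGroup_eq_zero_iff] at h₁ h₂
      exact (hadd x ▸ add_mem h₁ h₂ : (x : V) ∈ Λ))
  have hq := discForm_projDiscGroup_add hc hsym hUU' hU'U hfull hqT hqN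
  have hfq : ∀ a, qN (f a) = -qT a := fun a => by
    obtain ⟨x, hx, rfl⟩ := hd₁ a
    obtain ⟨k, hk⟩ := heven x hx
    have hfx : f (d₁ x) = d₂ x := by
      simpa [(Submodule.Quotient.mk_eq_zero L).mpr hx] using hglue x
    rw [hfx, eq_neg_iff_add_eq_zero, add_comm, hq x, hk, AddCircle.coe_two_mul_intCast_eq_zero]
  refine ⟨f, hf, hfq, g, hg, fun x => ?_, fun y => ?_⟩
  · have hsplit := discForm_add_of_coprime hsym hqN hcop
      (by rw [← map_nsmul, card_nsmul_eq_zero', map_zero] : _ • f (d₁ x) = 0)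
      (by rw [← map_nsmul, card_nsmul_eq_zero', map_zero] : _ • g (Submodule.Quotient.mk x) = 0)
    rw [hglue x, hfq] at hsplit
    rw [← hq x, hsplit, add_neg_cancel_left]
  · obtain ⟨x, rfl⟩ := projDiscGroup_surjective hc.symm hsym hU'U hfull hnd hfg y
    exact ⟨d₁ x, _, hglue x⟩

end OrthogonalSplitting

theorem stmt17_general {V : Type*} [AddCommGroup V] [Module ℚ V] [FiniteDimensional ℚ V]
    (B : BilinForm ℚ V) (hsym : ∀ x y, B x y = B y x) (hnd : B.Nondegenerate)
    (Λ : Submodule ℤ V) (hfull : Submodule.span ℚ (Λ : Set V) = ⊤) (hfg : Λ.FG)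
    (heven : ∀ x ∈ Λ, ∃ k : ℤ, B x x = 2 * (k : ℚ))
    (hdiscΛ : Nat.card (discGroup B Λ) = 3)
    (T : Submodule ℤ V) (hTΛ : T ≤ Λ)
    (hTprim : T = Λ ⊓ Submodule.restrictScalars ℤ (Submodule.span ℚ (T : Set V)))
    (N : Submodule ℤ V)
    (hN : N = Λ ⊓ Submodule.restrictScalars ℤ (B.orthogonal (Submodule.span ℚ (T : Set V))))
    (hcop : Nat.Coprime (Nat.card (discGroup B T)) 3)
    (qT : discGroup B T → AddCircle (2 : ℚ))
    (hqT : ∀ x : ↥(dualLat B T),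
      qT (Submodule.Quotient.mk x) = ((B x x : ℚ) : AddCircle (2 : ℚ)))
    (qN : discGroup B N → AddCircle (2 : ℚ))
    (hqN : ∀ x : ↥(dualLat B N),
      qN (Submodule.Quotient.mk x) = ((B x x : ℚ) : AddCircle (2 : ℚ))) :
    ∃ C : ZMod 3 → AddCircle (2 : ℚ), IsQuadratic C ∧ Nondeg C ∧
      (∃ σ : discGroup B N ≃+ (discGroup B T × ZMod 3),
        ∀ a : discGroup B N, (- qT (σ a).1) + C (σ a).2 = qN a) ∧
      Nonempty ((isometryGroup qN) ≃* (↥(isometryGroup qT) × ↥(isometryGroup C))) := by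
  set U := Submodule.span ℚ (T : Set V)
  have : Finite (discGroup B T) := Nat.finite_of_card_ne_zero fun h => by simp [h] at hcop
  have hc : IsCompl U (B.orthogonal U) :=
    LinearMap.BilinForm.isCompl_orthogonal_of_restrict_nondegenerate
      (fun x y h => hsym x y ▸ h) (restrict_span_nondegenerate hfg hfull hTΛ)
  obtain ⟨f, hf, hfq, g, hg, hgq, hspan⟩ := exists_discGroup_glue hsym hnd hfg hfull heven hc
    (fun u hu u' hu' => hu' u hu) hTprim hN (hdiscΛ ▸ hcop) hqT hqN
  have : Fact (Nat.Prime 3) := ⟨Nat.prime_three⟩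
  let ε := (ZMod.ringEquivCongr hdiscΛ.symm).toAddEquiv.trans
    (zmodAddCyclicAddEquiv (isAddCyclic_of_prime_card hdiscΛ))
  let φ := g.comp ε.toAddMonoidHom
  have h3 : ∀ c : ZMod 3, 3 • c = 0 := fun c => by rw [nsmul_eq_mul, ZMod.natCast_self, zero_mul]
  obtain ⟨σ, hσ, hO⟩ := exists_addEquiv_prod_of_coprime (g := φ) hf (hg.comp ε.injective) hcop
    (fun _ => card_nsmul_eq_zero') h3
    (fun y => (hspan y).imp fun a ⟨z, hz⟩ => ⟨ε.symm z, by simpa [φ] using hz⟩) hfq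
    (fun _ _ => discForm_add_of_coprime hsym hqN hcop)
  refine ⟨qN ∘ φ, (isQuadratic_of_discForm hqN).comp φ,
    nondeg_of_two_nsmul_ne_zero ((isQuadratic_of_discForm hqN).comp φ) fun c hc0 => ?_, ⟨σ, hσ⟩, hO⟩
  obtain ⟨x, hx⟩ := Submodule.Quotient.mk_surjective _ (ε c)
  rw [Function.comp_apply, AddMonoidHom.comp_apply, AddEquiv.coe_toAddMonoidHom, ← hx, hgq]
  exact two_nsmul_coe_ne_zero_of_prime_card hsym hnd hfg hfull (hdiscΛ ▸ Nat.prime_three)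
    ((discGroup.mk_eq_zero x).not.mp (hx ▸ ε.map_ne_zero_iff.mpr hc0))

/-- Let `T` be a primitive sublattice of an even lattice `Λ` (realized inside the rational
quadratic space `V = Λ ⊗ ℚ`) with `disc(Λ) = 3`, orthogonal complement `N`, and suppose
`disc(T)` is coprime to `3`. Then the discriminant form `A_N` is isomorphic, as a finite
quadratic module, to `A_T(-1) ⊕ C₃` where `C₃` is a non-degenerate quadratic form on
`ℤ/3ℤ`; consequently `O(A_N) ≅ O(A_T) × O(C₃)`.
Here `qT`, `qN` denote the discriminant quadratic forms `x̄ ↦ B(x,x) mod 2ℤ` on `A_T`,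
`A_N`, given as data together with their defining property. -/
theorem stmt17 {V : Type*} [AddCommGroup V] [Module ℚ V] [FiniteDimensional ℚ V]
    (B : BilinForm ℚ V) (hsym : ∀ x y, B x y = B y x) (hnd : B.Nondegenerate)
    (Λ : Submodule ℤ V) (hfull : Submodule.span ℚ (Λ : Set V) = ⊤) (hfg : Λ.FG)
    (hint : ∀ x ∈ Λ, ∀ y ∈ Λ, ∃ k : ℤ, B x y = (k : ℚ))
    (heven : ∀ x ∈ Λ, ∃ k : ℤ, B x x = 2 * (k : ℚ))
    (hdiscΛ : Nat.card (discGroup B Λ) = 3)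
    (T : Submodule ℤ V) (hTΛ : T ≤ Λ)
    (hTprim : T = Λ ⊓ Submodule.restrictScalars ℤ (Submodule.span ℚ (T : Set V)))
    (N : Submodule ℤ V)
    (hN : N = Λ ⊓ Submodule.restrictScalars ℤ (B.orthogonal (Submodule.span ℚ (T : Set V))))
    (hcop : Nat.Coprime (Nat.card (discGroup B T)) 3)
    (qT : discGroup B T → AddCircle (2 : ℚ))
    (hqT : ∀ x : ↥(dualLat B T),
      qT (Submodule.Quotient.mk x) = ((B x x : ℚ) : AddCircle (2 : ℚ)))
    (qN : discGroup B N → AddCircle (2 : ℚ))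
    (hqN : ∀ x : ↥(dualLat B N),
      qN (Submodule.Quotient.mk x) = ((B x x : ℚ) : AddCircle (2 : ℚ))) :
    ∃ C : ZMod 3 → AddCircle (2 : ℚ), IsQuadratic C ∧ Nondeg C ∧
      (∃ σ : discGroup B N ≃+ (discGroup B T × ZMod 3),
        ∀ a : discGroup B N, (- qT (σ a).1) + C (σ a).2 = qN a) ∧
      Nonempty ((isometryGroup qN) ≃* (↥(isometryGroup qT) × ↥(isometryGroup C))) :=
  stmt17_general B hsym hnd Λ hfull hfg heven hdiscΛ T hTΛ hTprim N hN hcop qT hqT qN hqN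
end

section
/- If finite quadratic modules satisfy A ⊕ C ≅ A ⊕ C' where A has order coprime to 3 and C, C' are non-degenerate quadratic forms on ℤ/3ℤ, and the signatures satisfy sgn(C) ≡ sgn(C') mod 8, then C ≅ C'. Moreover sgn(C₃) ≡ 2 mod 8 and sgn(C₃(−1)) ≡ 6 mod 8 for the two forms of order 3, so sgn(C) ≢ sgn(C(−1)) mod 8. -/
/-- Isomorphism of finite quadratic modules. -/
def QIso {A B : Type*} [AddCommGroup A] [AddCommGroup B]
    (q : A → AddCircle (2 : ℚ)) (q' : B → AddCircle (2 : ℚ)) : Prop :=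
  ∃ σ : A ≃+ B, ∀ x : A, q' (σ x) = q x

/-- The quadratic form on `ℤ/3ℤ` with `q(x) = a·x²/3 mod 2ℤ`; `a = 2` gives `C₃` and
`a = 4` gives `C₃(-1)`. -/
def stdQ (a : ℚ) (x : ZMod 3) : AddCircle (2 : ℚ) :=
  ((a * (x.val : ℚ) ^ 2 / 3 : ℚ) : AddCircle (2 : ℚ))

instance : Fact ((0 : ℚ) < 2) := ⟨by norm_num⟩

/-- `e^{π i t}` for `t ∈ ℚ/2ℤ` (well defined since `e^{πi(t + 2k)} = e^{πi t}`; here it is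
evaluated on the canonical representative in `[0,2)`). -/
noncomputable def ePiI (x : AddCircle (2 : ℚ)) : ℂ :=
  Complex.exp (Real.pi * Complex.I * ((((AddCircle.equivIco 2 0) x : ℚ) : ℝ) : ℂ))

/-- Milgram's formula: the finite quadratic module `(A, q)` has signature `k mod 8` if
`∑_{x ∈ A} e^{π i q(x)} = √|A| · e^{2π i k/8}`. -/
def HasSign {A : Type*} [AddCommGroup A] [Fintype A]
    (q : A → AddCircle (2 : ℚ)) (k : ℕ) : Prop :=
  ∑ x : A, ePiI (q x) =
    (Real.sqrt (Fintype.card A) : ℂ) * Complex.exp (2 * Real.pi * Complex.I * k / 8)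

/-! ### Auxiliary lemmas -/

lemma ePiI_coe (r : ℚ) (h0 : 0 ≤ r) (h1 : r < 2) :
    ePiI ((r : ℚ) : AddCircle (2:ℚ)) = Complex.exp (Real.pi * Complex.I * ((r : ℝ) : ℂ)) := by
  unfold ePiI
  congr 2
  norm_cast
  rw [show ((r : AddCircle (2:ℚ))) = QuotientAddGroup.mk r from rfl,
    AddCircle.coe_equivIco_mk_apply]
  rw [Int.fract_eq_self.mpr ⟨by positivity, by linarith⟩]
  ring

lemma coe_eq (a b : ℚ) (k : ℤ) (h : a - b = k * 2) :
    (a : AddCircle (2:ℚ)) = (b : AddCircle (2:ℚ)) := by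
  rw [show (a : AddCircle (2:ℚ)) = QuotientAddGroup.mk a from rfl,
    show (b : AddCircle (2:ℚ)) = QuotientAddGroup.mk b from rfl,
    QuotientAddGroup.eq_iff_sub_mem]
  exact AddSubgroup.mem_zmultiples_iff.mpr ⟨k, by rw [zsmul_eq_mul]; linarith⟩

lemma coe_smul (n : ℤ) (a : ℚ) :
    n • ((a : ℚ) : AddCircle (2:ℚ)) = ((n * a : ℚ) : AddCircle (2:ℚ)) := by
  have := map_zsmul (QuotientAddGroup.mk' (AddSubgroup.zmultiples (2:ℚ))) n a
  rw [zsmul_eq_mul] at this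
  exact this.symm

lemma valq0 : (((0 : ZMod 3).val : ℚ)) = 0 := by norm_num [show (0:ZMod 3).val = 0 from rfl]
lemma valq1 : (((1 : ZMod 3).val : ℚ)) = 1 := by norm_num [show (1:ZMod 3).val = 1 from rfl]
lemma valq2 : (((2 : ZMod 3).val : ℚ)) = 2 := by norm_num [show (2:ZMod 3).val = 2 from rfl]

lemma zmod3_sum {M : Type*} [AddCommMonoid M] (f : ZMod 3 → M) :
    ∑ x : ZMod 3, f x = f 0 + f 1 + f 2 := by
  rw [show (Finset.univ : Finset (ZMod 3)) = {0, 1, 2} from by decide]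
  rw [Finset.sum_insert (by decide), Finset.sum_insert (by decide), Finset.sum_singleton,
    add_assoc]

lemma exp_eval (t : ℝ) : Complex.exp (Real.pi * Complex.I * (t:ℂ)) =
    (Real.cos (Real.pi * t) : ℂ) + (Real.sin (Real.pi * t) : ℂ) * Complex.I := by
  rw [show (Real.pi * Complex.I * (t:ℂ)) = ((Real.pi * t : ℝ) : ℂ) * Complex.I by
    push_cast; ring, Complex.exp_mul_I]
  norm_cast

lemma cos23 : Real.cos (Real.pi * (2/3)) = -(1/2) := by
  rw [show Real.pi * (2/3) = Real.pi - Real.pi/3 by ring, Real.cos_pi_sub,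
    Real.cos_pi_div_three]

lemma sin23 : Real.sin (Real.pi * (2/3)) = Real.sqrt 3 / 2 := by
  rw [show Real.pi * (2/3) = Real.pi - Real.pi/3 by ring, Real.sin_pi_sub,
    Real.sin_pi_div_three]

lemma cos43 : Real.cos (Real.pi * (4/3)) = -(1/2) := by
  rw [show Real.pi * (4/3) = Real.pi + Real.pi/3 by ring]
  rw [Real.cos_add]
  simp [Real.cos_pi_div_three]

lemma sin43 : Real.sin (Real.pi * (4/3)) = -(Real.sqrt 3 / 2) := by
  rw [show Real.pi * (4/3) = Real.pi + Real.pi/3 by ring]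
  rw [Real.sin_add]
  simp [Real.sin_pi_div_three]

lemma e0 : Complex.exp (Real.pi * Complex.I * (((0:ℚ):ℝ):ℂ)) = 1 := by
  norm_num [Complex.exp_zero]

lemma e23 : Complex.exp (Real.pi * Complex.I * (((2/3:ℚ):ℝ):ℂ)) =
    -(1/2) + (Real.sqrt 3 / 2 : ℝ) * Complex.I := by
  rw [show (((2/3:ℚ):ℝ):ℂ) = ((2/3 : ℝ) : ℂ) by norm_num, exp_eval, cos23, sin23]
  norm_num

lemma e43 : Complex.exp (Real.pi * Complex.I * (((4/3:ℚ):ℝ):ℂ)) =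
    -(1/2) - (Real.sqrt 3 / 2 : ℝ) * Complex.I := by
  rw [show (((4/3:ℚ):ℝ):ℂ) = ((4/3 : ℝ) : ℂ) by norm_num, exp_eval, cos43, sin43]
  push_cast
  ring

lemma stdQ2_vals : stdQ 2 0 = ((0:ℚ) : AddCircle (2:ℚ)) ∧
    stdQ 2 1 = ((2/3:ℚ) : AddCircle (2:ℚ)) ∧ stdQ 2 2 = ((2/3:ℚ) : AddCircle (2:ℚ)) := by
  refine ⟨?_, ?_, ?_⟩
  · unfold stdQ; rw [valq0]; exact congrArg _ (by norm_num)
  · unfold stdQ; rw [valq1]; exact congrArg _ (by norm_num)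
  · unfold stdQ; rw [valq2]
    exact coe_eq _ _ 1 (by norm_num)

lemma stdQ4_vals : stdQ 4 0 = ((0:ℚ) : AddCircle (2:ℚ)) ∧
    stdQ 4 1 = ((4/3:ℚ) : AddCircle (2:ℚ)) ∧ stdQ 4 2 = ((4/3:ℚ) : AddCircle (2:ℚ)) := by
  refine ⟨?_, ?_, ?_⟩
  · unfold stdQ; rw [valq0]; exact congrArg _ (by norm_num)
  · unfold stdQ; rw [valq1]; exact congrArg _ (by norm_num)
  · unfold stdQ; rw [valq2]
    exact coe_eq _ _ 2 (by norm_num)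

lemma sum2 : ∑ x : ZMod 3, ePiI (stdQ 2 x) = (Real.sqrt 3 : ℂ) * Complex.I := by
  obtain ⟨h0, h1, h2⟩ := stdQ2_vals
  rw [zmod3_sum, h0, h1, h2, ePiI_coe 0 (by norm_num) (by norm_num),
    ePiI_coe (2/3) (by norm_num) (by norm_num), e0, e23]
  push_cast
  ring

lemma sum4 : ∑ x : ZMod 3, ePiI (stdQ 4 x) = -((Real.sqrt 3 : ℂ) * Complex.I) := by
  obtain ⟨h0, h1, h2⟩ := stdQ4_vals
  rw [zmod3_sum, h0, h1, h2, ePiI_coe 0 (by norm_num) (by norm_num),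
    ePiI_coe (4/3) (by norm_num) (by norm_num), e0, e43]
  push_cast
  ring

lemma exp2 : Complex.exp (2 * Real.pi * Complex.I * (2:ℕ) / 8) = Complex.I := by
  rw [show (2 * (Real.pi:ℂ) * Complex.I * (2:ℕ) / 8) = Real.pi * Complex.I * ((1/2 : ℝ):ℂ) by
    push_cast; ring, exp_eval]
  rw [show Real.pi * (1/2) = Real.pi/2 by ring, Real.cos_pi_div_two, Real.sin_pi_div_two]
  simp

lemma exp6 : Complex.exp (2 * Real.pi * Complex.I * (6:ℕ) / 8) = -Complex.I := by
  rw [show (2 * (Real.pi:ℂ) * Complex.I * (6:ℕ) / 8) = Real.pi * Complex.I * ((3/2 : ℝ):ℂ) by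
    push_cast; ring, exp_eval]
  rw [show Real.pi * (3/2) = Real.pi + Real.pi/2 by ring, Real.cos_add, Real.sin_add]
  simp [Real.cos_pi_div_two, Real.sin_pi_div_two]

lemma cardZ3 : (Fintype.card (ZMod 3)) = 3 := by simp

lemma hasSign_stdQ2 : HasSign (stdQ 2) 2 := by
  unfold HasSign
  rw [sum2, cardZ3, exp2]
  norm_num

lemma hasSign_stdQ4 : HasSign (stdQ 4) 6 := by
  unfold HasSign
  rw [sum4, cardZ3, exp6]
  push_cast
  ring

lemma sign_eq {Cq : ZMod 3 → AddCircle (2:ℚ)} {k m : ℕ} (h : HasSign Cq k)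
    (h' : HasSign Cq m) : (k : ZMod 8) = (m : ZMod 8) := by
  unfold HasSign at h h'
  have hs : ((Real.sqrt (Fintype.card (ZMod 3)) : ℝ) : ℂ) ≠ 0 := by
    rw [cardZ3]
    simp only [ne_eq, Complex.ofReal_eq_zero]
    positivity
  have hexp := mul_left_cancel₀ hs (h.symm.trans h')
  rw [Complex.exp_eq_exp_iff_exists_int] at hexp
  obtain ⟨n, hn⟩ := hexp
  have hπ : (Real.pi : ℂ) ≠ 0 := by exact_mod_cast Real.pi_ne_zero
  have h2 : (2 * (Real.pi:ℂ) * Complex.I) ≠ 0 := by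
    simp [hπ, Complex.I_ne_zero]
  have hk : (k:ℂ) = (m:ℂ) + 8 * n := by
    have hn2 : (2 * (Real.pi:ℂ) * Complex.I) * ((k:ℂ)/8) =
        (2 * (Real.pi:ℂ) * Complex.I) * ((m:ℂ)/8 + n) := by linear_combination hn
    have := mul_left_cancel₀ h2 hn2
    linear_combination 8 * this
  have hkz : (k:ℤ) = (m:ℤ) + 8 * n := by exact_mod_cast hk
  have := congrArg (fun z : ℤ => (z : ZMod 8)) hkz
  push_cast at this
  simpa [show ((8:ZMod 8)) = 0 from rfl] using this

lemma classify {Cq : ZMod 3 → AddCircle (2:ℚ)} (hq : IsQuadratic Cq) (hnd : Nondeg Cq) :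
    Cq = stdQ 2 ∨ Cq = stdQ 4 := by
  have heval : ∀ x : ZMod 3, Cq x = ((x.val : ℤ))^2 • Cq 1 := by
    intro x
    have hx : ((x.val : ℤ)) • (1 : ZMod 3) = x := by
      rw [zsmul_eq_mul, mul_one]
      push_cast
      exact ZMod.natCast_rightInverse x
    calc Cq x = Cq (((x.val : ℤ)) • 1) := by rw [hx]
      _ = ((x.val : ℤ))^2 • Cq 1 := hq _ _
  have h3 : (3:ℤ) • Cq 1 = 0 := by
    have ha := heval 2
    have hb := hq (-1) 1
    rw [show ((-1 : ℤ) • (1 : ZMod 3)) = 2 from by decide] at hb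
    rw [show ((2:ZMod 3).val : ℤ) = 2 from by norm_num [show (2:ZMod 3).val = 2 from rfl]] at ha
    have h4 : (4:ℤ) • Cq 1 = (1:ℤ) • Cq 1 := by
      rw [show (4:ℤ) = 2^2 by norm_num, show (1:ℤ) = (-1:ℤ)^2 by norm_num, ← ha, ← hb]
    calc (3:ℤ) • Cq 1 = ((4:ℤ) - 1) • Cq 1 := by norm_num
      _ = (4:ℤ) • Cq 1 + -((1:ℤ) • Cq 1) := sub_zsmul _ _ _
      _ = 0 := by rw [h4, add_neg_cancel]
  obtain ⟨r, hr⟩ := QuotientAddGroup.mk_surjective (Cq 1)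
  rw [show QuotientAddGroup.mk r = ((r:ℚ) : AddCircle (2:ℚ)) from rfl] at hr
  rw [← hr, coe_smul] at h3
  rw [show (((3:ℤ):ℚ)) * r = 3 * r from by push_cast; ring] at h3
  have h3' : (3 * r : ℚ) ∈ AddSubgroup.zmultiples (2:ℚ) := by
    rwa [show ((3 * r : ℚ) : AddCircle (2:ℚ)) = QuotientAddGroup.mk (3*r) from rfl,
      QuotientAddGroup.eq_zero_iff] at h3
  obtain ⟨z, hz⟩ := AddSubgroup.mem_zmultiples_iff.mp h3'
  rw [zsmul_eq_mul] at hz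
  have hrval : r = 2 * z / 3 := by field_simp at hz ⊢; linarith
  have hc : Cq 1 = ((2 * ((z % 3 : ℤ)) / 3 : ℚ) : AddCircle (2:ℚ)) := by
    rw [← hr, hrval]
    refine coe_eq _ _ (z / 3) ?_
    have : z = 3 * (z / 3) + z % 3 := (Int.mul_ediv_add_emod z 3).symm
    rw [show ((z:ℚ)) = 3 * ((z/3 : ℤ) : ℚ) + ((z % 3 : ℤ) : ℚ) from by
      exact_mod_cast congrArg (Int.cast : ℤ → ℚ) this]
    ring
  have hm : z % 3 = 0 ∨ z % 3 = 1 ∨ z % 3 = 2 := by omega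
  rcases hm with hm | hm | hm
  · exfalso
    rw [hm] at hc
    norm_num at hc
    have hall : ∀ x : ZMod 3, Cq x = 0 := by
      intro x; rw [heval, hc, smul_zero]
    obtain ⟨y, hy⟩ := hnd 1 (by decide)
    exact hy (by rw [hall, hall, hall]; simp)
  · left
    rw [hm] at hc
    funext x
    rw [heval, hc, coe_smul]
    unfold stdQ
    exact congrArg _ (by push_cast; ring)
  · right
    rw [hm] at hc
    funext x
    rw [heval, hc, coe_smul]
    unfold stdQ
    exact congrArg _ (by push_cast; ring)

/-- If finite quadratic modules satisfy `A ⊕ C ≅ A ⊕ C'` where `A` has order coprime to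
`3` and `C, C'` are non-degenerate quadratic forms on `ℤ/3ℤ` with `sgn(C) ≡ sgn(C') mod 8`,
then `C ≅ C'`. Moreover `sgn(C₃) ≡ 2 mod 8` and `sgn(C₃(-1)) ≡ 6 mod 8`, so
`sgn(C) ≢ sgn(C(-1)) mod 8`. -/
theorem stmt18 {A : Type*} [AddCommGroup A] [Fintype A]
    (qA : A → AddCircle (2 : ℚ)) (hqA : IsQuadratic qA) (hndA : Nondeg qA)
    (hcop : Nat.Coprime (Fintype.card A) 3)
    (C C' : ZMod 3 → AddCircle (2 : ℚ))
    (hC : IsQuadratic C) (hC' : IsQuadratic C') (hndC : Nondeg C) (hndC' : Nondeg C')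
    (hiso : QIso (fun p : A × ZMod 3 => qA p.1 + C p.2)
                 (fun p : A × ZMod 3 => qA p.1 + C' p.2))
    (k k' : ℕ) (hk : HasSign C k) (hk' : HasSign C' k')
    (hsgn : (k : ZMod 8) = (k' : ZMod 8)) :
    QIso C C' ∧ HasSign (stdQ 2) 2 ∧ HasSign (stdQ 4) 6 ∧ ((2 : ZMod 8) ≠ 6) := by
  refine ⟨?_, hasSign_stdQ2, hasSign_stdQ4, by decide⟩
  rcases classify hC hndC with h | h <;> rcases classify hC' hndC' with h' | h'
  · exact ⟨AddEquiv.refl _, fun x => by rw [h, h']; rfl⟩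
  · exfalso
    have e1 : (k : ZMod 8) = ((2:ℕ) : ZMod 8) := sign_eq (h ▸ hk) hasSign_stdQ2
    have e2 : (k' : ZMod 8) = ((6:ℕ) : ZMod 8) := sign_eq (h' ▸ hk') hasSign_stdQ4
    rw [e1, e2] at hsgn
    exact absurd hsgn (by decide)
  · exfalso
    have e1 : (k : ZMod 8) = ((6:ℕ) : ZMod 8) := sign_eq (h ▸ hk) hasSign_stdQ4
    have e2 : (k' : ZMod 8) = ((2:ℕ) : ZMod 8) := sign_eq (h' ▸ hk') hasSign_stdQ2
    rw [e1, e2] at hsgn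
    exact absurd hsgn (by decide)
  · exact ⟨AddEquiv.refl _, fun x => by rw [h, h']; rfl⟩
end
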